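/- (Lemma 3 of the paper.) In the closed-loop coordinated system, for every coordination strategy ψ, every time t, every per-step cost function ℓ_t : (Fin n → 𝒳) × (Fin n → 𝒰) → ℝ, and every mean-field history z_{1:t} with positive probability, the conditional expectation of the per-step cost satisfies E[ℓ_t(X_t, (Γ_t(X_t^1),…,Γ_t(X_t^n))) | Z_{1:t} = z_{1:t}] = ℓ̂_t(z_t, γ_t), where γ_t = ψ_t(z_{1:t}) and ℓ̂_t(m, γ) := (1/|H(m)|) ∑_{x ∈ H(m)} ℓ_t(x, (γ(x^1),…,γ(x^n))). In particular this conditional expectation depends only on (z_t, γ_t) and not on the strategy ψ or on z_{1:t-1}. -/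

import Mathlib

open scoped ENNReal

def emp {X : Type*} [DecidableEq X] {n : ℕ} (x : Fin n → X) : X → ℕ :=
  fun a => (Finset.univ.filter (fun i => x i = a)).card

def Hset {X : Type*} [Fintype X] [DecidableEq X] (n : ℕ) (m : X → ℕ) : Finset (Fin n → X) :=
  Finset.univ.filter (fun x => emp x = m)

noncomputable def iid {W : Type*} [Fintype W] (n : ℕ) (ν : PMF W) : PMF (Fin n → W) :=
  PMF.ofFintype (fun w => ∏ i, ν (w i)) (by
    have h : ∑ j : W, ν j = 1 := by rw [← ν.tsum_coe, tsum_fintype]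
    rw [← Fintype.prod_sum]; simp [h])

variable {X U W : Type*} [Fintype X] [DecidableEq X] [Fintype U] [Fintype W]

/-- The closed-loop law of the state trajectory `(X_0, …, X_t)` in the coordinated system:
initial states i.i.d. `PX`; the coordinator applies the prescription `ψ t z_{0:t} : X → U`
to each local state; local dynamics `f` driven by i.i.d. noises `PW t`. -/
noncomputable def hist (n : ℕ) (PX : PMF X) (PW : ℕ → PMF W)
    (f : ℕ → X → U → W → (X → ℕ) → X)
    (ψ : (t : ℕ) → (Fin (t + 1) → (X → ℕ)) → X → U) :
    (t : ℕ) → PMF (Fin (t + 1) → (Fin n → X))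
  | 0 => (iid n PX).map (fun x _ => x)
  | t + 1 =>
    (hist n PX PW f ψ t).bind (fun xs =>
      (iid n (PW t)).map (fun w =>
        Fin.snoc xs (fun i =>
          f t (xs (Fin.last t) i)
            (ψ t (fun s => emp (xs s)) (xs (Fin.last t) i))
            (w i) (emp (xs (Fin.last t))))))

/-!
Exchangeability: the i.i.d. initial states and noises, and dynamics that see the population only
through its empirical distribution, make the closed-loop law invariant under relabelling the
agents simultaneously at all times. Two profiles with the same empirical distribution differ by a
relabelling, so given `Z_{0:t} = z` the state `X_t` is uniform on `H(z_t)`, while `Γ_t = ψ_t(z)`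
is then fixed.
-/

open Finset

def empHistoryEvent {X : Type*} [Fintype X] [DecidableEq X] (n : ℕ) {t : ℕ}
    (z : Fin (t + 1) → (X → ℕ)) : Finset (Fin (t + 1) → Fin n → X) :=
  univ.filter fun xs => ∀ s, emp (xs s) = z s

def permAgents {ι α : Type*} (σ : Equiv.Perm ι) : (ι → α) ≃ (ι → α) :=
  Equiv.piCongrLeft' (fun _ => α) σ.symm

@[simp]
lemma permAgents_apply {ι α : Type*} (σ : Equiv.Perm ι) (x : ι → α) :
    permAgents σ x = x ∘ σ :=
  rfl

lemma emp_comp_perm {α : Type*} [DecidableEq α] {n : ℕ} (x : Fin n → α)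
    (σ : Equiv.Perm (Fin n)) : emp (x ∘ σ) = emp x :=
  funext fun _ => card_equiv σ (by simp)

lemma exists_perm_comp_eq_of_emp_eq {α : Type*} [DecidableEq α] {n : ℕ} {x y : Fin n → α}
    (h : emp x = emp y) : ∃ σ : Equiv.Perm (Fin n), y ∘ σ = x := by
  have hfiber : ∀ a, Fintype.card {i // x i = a} = Fintype.card {i // y i = a} := fun a => by
    simpa only [Fintype.card_subtype, emp] using congrFun h a
  exact ⟨Equiv.ofFiberEquiv fun a => Fintype.equivOfCardEq (hfiber a),
    funext (Equiv.ofFiberEquiv_map _)⟩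

lemma iid_comp_perm {β : Type*} [Fintype β] {n : ℕ} (ν : PMF β) (σ : Equiv.Perm (Fin n))
    (w : Fin n → β) : iid n ν (w ∘ σ) = iid n ν w := by
  simpa only [iid, PMF.ofFintype_apply, Function.comp_apply] using
    Equiv.prod_comp σ (fun i => ν (w i))

namespace PMF

variable {α β : Type*}

lemma map_apply_eq_of_equivariant (p : PMF α) (f f' : α → β) (e : α ≃ α) {g : β → β}
    (hg : g.Injective) (hp : ∀ a, p (e a) = p a) (hf : ∀ a, f' (e a) = g (f a)) (b : β) :
    p.map f' (g b) = p.map f b := by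
  simp only [map_apply]
  exact (e.tsum_eq _).symm.trans (tsum_congr fun a => by rw [hp, hf, hg.eq_iff])

lemma bind_apply_eq_of_equivariant (p : PMF α) (k : α → PMF β) (e : α ≃ α) (g : β → β)
    (hp : ∀ a, p (e a) = p a) (hk : ∀ a b, k (e a) (g b) = k a b) (b : β) :
    p.bind k (g b) = p.bind k b := by
  simp only [bind_apply]
  exact (e.tsum_eq _).symm.trans (tsum_congr fun a => by rw [hp, hk])

end PMF

lemma hist_comp_perm {X U W : Type*} [Fintype X] [DecidableEq X] [Fintype W]
    (n : ℕ) (PX : PMF X) (PW : ℕ → PMF W) (f : ℕ → X → U → W → (X → ℕ) → X)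
    (ψ : (t : ℕ) → (Fin (t + 1) → (X → ℕ)) → X → U) (σ : Equiv.Perm (Fin n)) (t : ℕ)
    (xs : Fin (t + 1) → Fin n → X) :
    hist n PX PW f ψ t (fun s => xs s ∘ σ) = hist n PX PW f ψ t xs := by
  induction t with
  | zero =>
    exact PMF.map_apply_eq_of_equivariant _ _ _ (permAgents σ)
      (Equiv.piCongrRight fun _ => permAgents σ).injective (iid_comp_perm PX σ) (fun _ => rfl) xs
  | succ t ih =>
    simp only [hist]
    refine PMF.bind_apply_eq_of_equivariant _ _ (Equiv.piCongrRight fun _ => permAgents σ)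
      (Equiv.piCongrRight fun _ => permAgents σ) ih (fun ys zs => ?_) xs
    refine PMF.map_apply_eq_of_equivariant _ _ _ (permAgents σ)
      (Equiv.piCongrRight fun _ => permAgents σ).injective (iid_comp_perm (PW t) σ) (fun w => ?_) zs
    funext s
    refine Fin.lastCases ?_ (fun r => ?_) s
    · funext i
      simp [emp_comp_perm]
    · simp

lemma sum_hist_filter_last_eq_of_emp_eq {X U W : Type*} [Fintype X] [DecidableEq X] [Fintype W]
    (n : ℕ) (PX : PMF X) (PW : ℕ → PMF W) (f : ℕ → X → U → W → (X → ℕ) → X)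
    (ψ : (t : ℕ) → (Fin (t + 1) → (X → ℕ)) → X → U) (t : ℕ) (z : Fin (t + 1) → (X → ℕ))
    {x y : Fin n → X} (hxy : emp x = emp y) :
    ∑ xs ∈ empHistoryEvent n z with xs (Fin.last t) = x, (hist n PX PW f ψ t xs).toReal =
      ∑ xs ∈ empHistoryEvent n z with xs (Fin.last t) = y, (hist n PX PW f ψ t xs).toReal := by
  obtain ⟨σ, rfl⟩ := exists_perm_comp_eq_of_emp_eq hxy
  symm
  refine sum_equiv (Equiv.piCongrRight fun _ => permAgents σ) (fun xs => ?_)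
    (fun xs _ => congrArg ENNReal.toReal (hist_comp_perm n PX PW f ψ σ t xs).symm)
  simp [empHistoryEvent, emp_comp_perm, σ.surjective.injective_comp_right.eq_iff]

lemma sum_mul_comp_div_sum_eq_average {ι κ : Type*} [DecidableEq κ] {F : Finset ι}
    {H : Finset κ} {π : ι → κ} (hπ : ∀ i ∈ F, π i ∈ H) (w : ι → ℝ) (g : κ → ℝ)
    (hfiber : ∀ x ∈ H, ∀ y ∈ H, ∑ i ∈ F with π i = x, w i = ∑ i ∈ F with π i = y, w i)
    (hw : ∑ i ∈ F, w i ≠ 0) :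
    (∑ i ∈ F, w i * g (π i)) / ∑ i ∈ F, w i = (∑ x ∈ H, g x) / #H := by
  have hsum : ∀ v : κ → ℝ,
      ∑ i ∈ F, w i * v (π i) = ∑ x ∈ H, (∑ i ∈ F with π i = x, w i) * v x := fun v => by
    rw [← sum_fiberwise_of_maps_to hπ]
    refine sum_congr rfl fun x _ => ?_
    rw [sum_mul]
    exact sum_congr rfl fun i hi => by rw [(mem_filter.1 hi).2]
  have htotal : ∑ i ∈ F, w i = ∑ x ∈ H, ∑ i ∈ F with π i = x, w i := by
    simpa using hsum 1
  obtain ⟨x₀, hx₀⟩ : H.Nonempty := by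
    refine nonempty_iff_ne_empty.2 fun hH => hw ?_
    rw [htotal, hH, sum_empty]
  set c := ∑ i ∈ F with π i = x₀, w i
  have hnum : ∑ i ∈ F, w i * g (π i) = c * ∑ x ∈ H, g x := by
    rw [hsum, mul_sum]
    exact sum_congr rfl fun x hx => by rw [hfiber x hx x₀ hx₀]
  have hden : ∑ i ∈ F, w i = c * #H := by
    rw [htotal, sum_congr rfl fun x hx => hfiber x hx x₀ hx₀, sum_const, nsmul_eq_mul, mul_comm]
  rw [hden] at hw ⊢
  rw [hnum, mul_div_mul_left _ _ (left_ne_zero_of_mul hw)]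

theorem stmt5_general (n : ℕ) (PX : PMF X) (PW : ℕ → PMF W)
    (f : ℕ → X → U → W → (X → ℕ) → X)
    (ψ : (t : ℕ) → (Fin (t + 1) → (X → ℕ)) → X → U)
    (t : ℕ) (ℓ : (Fin n → X) → (Fin n → U) → ℝ)
    (z : Fin (t + 1) → (X → ℕ))
    (hz : 0 < ∑ xs ∈ Finset.univ.filter
        (fun xs : Fin (t + 1) → (Fin n → X) => ∀ s, emp (xs s) = z s),
        hist n PX PW f ψ t xs) :
    (∑ xs ∈ Finset.univ.filter
        (fun xs : Fin (t + 1) → (Fin n → X) => ∀ s, emp (xs s) = z s),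
        (hist n PX PW f ψ t xs).toReal *
          ℓ (xs (Fin.last t))
            (fun i => ψ t (fun s => emp (xs s)) (xs (Fin.last t) i)))
      / (∑ xs ∈ Finset.univ.filter
          (fun xs : Fin (t + 1) → (Fin n → X) => ∀ s, emp (xs s) = z s),
          (hist n PX PW f ψ t xs).toReal)
    = (∑ x ∈ Hset n (z (Fin.last t)), ℓ x (fun i => ψ t z (x i)))
        / ((Hset n (z (Fin.last t))).card : ℝ) := by
  have hmaps : ∀ xs ∈ empHistoryEvent n z, xs (Fin.last t) ∈ Hset n (z (Fin.last t)) :=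
    fun xs hxs => by simpa [Hset] using (mem_filter.1 hxs).2 (Fin.last t)
  have hprescription : ∀ xs ∈ empHistoryEvent n z, ψ t (fun s => emp (xs s)) = ψ t z :=
    fun xs hxs => by rw [funext (mem_filter.1 hxs).2]
  have hmass : ∑ xs ∈ empHistoryEvent n z, (hist n PX PW f ψ t xs).toReal ≠ 0 := by
    rw [← ENNReal.toReal_sum fun xs _ => PMF.apply_ne_top _ xs]
    exact ENNReal.toReal_ne_zero.2 ⟨hz.ne', ENNReal.sum_ne_top.2 fun xs _ => PMF.apply_ne_top _ xs⟩
  rw [sum_congr rfl fun xs hxs => by rw [hprescription xs hxs]]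
  exact sum_mul_comp_div_sum_eq_average hmaps _ (fun x => ℓ x fun i => ψ t z (x i))
    (fun x hx y hy => sum_hist_filter_last_eq_of_emp_eq n PX PW f ψ t z
      ((mem_filter.1 hx).2.trans (mem_filter.1 hy).2.symm)) hmass

/-- Lemma 3: under any coordination strategy, the conditional expectation of the per-step cost
given a positive-probability mean-field history `z_{0:t}` equals
`ℓ̂_t(z_t, γ_t) = (1/|H(z_t)|) ∑_{x ∈ H(z_t)} ℓ_t(x, (γ_t(x^1),…,γ_t(x^n)))` with
`γ_t = ψ t z`; it depends only on `(z_t, γ_t)`, not on the earlier history or the strategy. -/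
theorem stmt5 (n : ℕ) (hn : 1 ≤ n) (PX : PMF X) (PW : ℕ → PMF W)
    (f : ℕ → X → U → W → (X → ℕ) → X)
    (ψ : (t : ℕ) → (Fin (t + 1) → (X → ℕ)) → X → U)
    (t : ℕ) (ℓ : (Fin n → X) → (Fin n → U) → ℝ)
    (z : Fin (t + 1) → (X → ℕ))
    (hz : 0 < ∑ xs ∈ Finset.univ.filter
        (fun xs : Fin (t + 1) → (Fin n → X) => ∀ s, emp (xs s) = z s),
        hist n PX PW f ψ t xs) :
    (∑ xs ∈ Finset.univ.filter
        (fun xs : Fin (t + 1) → (Fin n → X) => ∀ s, emp (xs s) = z s),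
        (hist n PX PW f ψ t xs).toReal *
          ℓ (xs (Fin.last t))
            (fun i => ψ t (fun s => emp (xs s)) (xs (Fin.last t) i)))
      / (∑ xs ∈ Finset.univ.filter
          (fun xs : Fin (t + 1) → (Fin n → X) => ∀ s, emp (xs s) = z s),
          (hist n PX PW f ψ t xs).toReal)
    = (∑ x ∈ Hset n (z (Fin.last t)), ℓ x (fun i => ψ t z (x i)))
        / ((Hset n (z (Fin.last t))).card : ℝ) :=
  stmt5_general n PX PW f ψ t ℓ z hz
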